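/- arXiv:2409.08694 — 3 statements merged into one kernel-verified Lean document; each statement's English description precedes it below -/
import Mathlib

section
/- Let s ≥ 2, t ≥ 3 and m ≥ 2 be integers, let n = sm, and fix an element x ∈ [n]. Then the family F consisting of all subsets of [n] of size at least m together with all subsets of size m-1 that do not contain x is K_{s×t}-free. Consequently vex(n, K_{s×t}) ≥ Σ_{i=m}^{n} C(n,i) + C(n-1, m-1). -/
open Finset

/-- The family `F` of subsets of `[n]` contains a copy of the complete `s`-partite
graph `K_{s×t}` (all parts of size `t`) in the Kneser cube: there are `s·t` pairwise
distinct members `A j i ∈ F` such that sets belonging to different groups `j ≠ j'`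
are disjoint. -/
def containsKst (n s t : ℕ) (F : Finset (Finset (Fin n))) : Prop :=
  ∃ A : Fin s → Fin t → Finset (Fin n),
    (∀ j i, A j i ∈ F) ∧
    Function.Injective (fun p : Fin s × Fin t => A p.1 p.2) ∧
    ∀ j j' : Fin s, j ≠ j' → ∀ i i' : Fin t, Disjoint (A j i) (A j' i')

/-- `vexKst n s t` : the maximum size of a `K_{s×t}`-free family of subsets of `[n]`. -/
noncomputable def vexKst (n s t : ℕ) : ℕ :=
  sSup {k | ∃ F : Finset (Finset (Fin n)), ¬ containsKst n s t F ∧ F.card = k}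

/-!
Let the parts of a copy of `K_{s×t}` in the family have unions `V₁, …, V_s`. These are pairwise
disjoint, and each part consists of `t ≥ 2` distinct sets of size at least `m - 1`, so each union
has at least `m` elements. As `n = sm`, the `V_j` partition `[n]` into blocks of size exactly `m`.
The block containing `x` then has only two subsets in the family, itself and itself minus `x`,
which cannot host the `t ≥ 3` distinct sets of its part.
-/

open Function

variable {ι α : Type*} [Fintype ι] [DecidableEq α]

theorem lt_card_biUnion_of_injective {A : ι → Finset α} (hA : Injective A)
    (hι : 1 < Fintype.card ι) {k : ℕ} (hk : ∀ i, k ≤ #(A i)) :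
    k < #(univ.biUnion A) := by
  by_contra! hle
  have hAeq : ∀ i, A i = univ.biUnion A := fun i =>
    eq_of_subset_of_card_le (subset_biUnion_of_mem A (mem_univ i)) (hle.trans (hk i))
  obtain ⟨i, i', hne⟩ := Fintype.one_lt_card_iff.1 hι
  exact hne (hA ((hAeq i).trans (hAeq i').symm))

theorem biUnion_eq_univ_and_card_eq_of_le [Fintype α] {V : ι → Finset α}
    (hV : Pairwise (Disjoint on V)) {m : ℕ} (hm : ∀ j, m ≤ #(V j))
    (hcard : Fintype.card α ≤ Fintype.card ι * m) :
    univ.biUnion V = univ ∧ ∀ j, #(V j) = m := by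
  have hunion : #(univ.biUnion V) = ∑ j, #(V j) :=
    card_biUnion fun j _ j' _ hjj' => hV hjj'
  have hlower : Fintype.card ι * m ≤ ∑ j, #(V j) := by
    simpa using sum_le_sum fun j (_ : j ∈ univ) => hm j
  have hupper : #(univ.biUnion V) ≤ Fintype.card α := card_le_univ _
  refine ⟨eq_univ_of_card _ (by omega), fun j => ?_⟩
  have hsum : ∑ _j : ι, m = ∑ j, #(V j) := by simp only [sum_const, card_univ, smul_eq_mul]; omega
  exact ((sum_eq_sum_iff_of_le fun j _ => hm j).1 hsum j (mem_univ j)).symm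

theorem eq_or_eq_erase_of_subset {V X : Finset α} {x : α} (hx : x ∈ V) (hXV : X ⊆ V)
    (hX : #V ≤ #X ∨ (#X = #V - 1 ∧ x ∉ X)) :
    X = V ∨ X = V.erase x := by
  rcases hX with hcard | ⟨hcard, hxX⟩
  · exact Or.inl (eq_of_subset_of_card_le hXV hcard)
  · refine Or.inr (eq_of_subset_of_card_le (subset_erase.2 ⟨hXV, hxX⟩) ?_)
    rw [card_erase_of_mem hx, hcard]

def extremalFamily [Fintype α] (m : ℕ) (x : α) : Finset (Finset α) :=
  univ.filter fun X => m ≤ #X ∨ (#X = m - 1 ∧ x ∉ X)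

omit [DecidableEq α] in
theorem card_filter_le_card [Fintype α] (m : ℕ) :
    #(univ.filter fun X : Finset α => m ≤ #X) =
      ∑ i ∈ Icc m (Fintype.card α), (Fintype.card α).choose i := by
  rw [card_eq_sum_card_fiberwise (f := card) (t := Icc m (Fintype.card α))
    fun X hX => mem_Icc.2 ⟨(mem_filter.1 hX).2, card_le_univ X⟩]
  refine sum_congr rfl fun i hi => ?_
  have hfiber : (univ.filter fun X : Finset α => m ≤ #X).filter (fun X => #X = i) =
      powersetCard i univ := by
    ext X
    simp only [mem_filter, mem_univ, true_and, mem_powersetCard, subset_univ]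
    constructor
    · exact fun h => h.2
    · rintro rfl
      exact ⟨(mem_Icc.1 hi).1, rfl⟩
  rw [hfiber, card_powersetCard, card_univ]

theorem card_filter_card_eq_and_notMem [Fintype α] (k : ℕ) (x : α) :
    #(univ.filter fun X : Finset α => #X = k ∧ x ∉ X) = (Fintype.card α - 1).choose k := by
  have hfilter : (univ.filter fun X : Finset α => #X = k ∧ x ∉ X) =
      powersetCard k (univ.erase x) := by
    ext X
    simp only [mem_filter, mem_univ, true_and, mem_powersetCard, subset_erase, subset_univ]
    tauto
  rw [hfilter, card_powersetCard, card_erase_of_mem (mem_univ x), card_univ]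

theorem card_extremalFamily [Fintype α] {m : ℕ} (hm : 0 < m) (x : α) :
    #(extremalFamily m x) = ∑ i ∈ Icc m (Fintype.card α), (Fintype.card α).choose i +
      (Fintype.card α - 1).choose (m - 1) := by
  rw [extremalFamily, filter_or, card_union_of_disjoint, card_filter_le_card,
    card_filter_card_eq_and_notMem]
  exact disjoint_filter.2 fun X _ hle ⟨hcard, _⟩ => by omega

theorem not_containsKst_extremalFamily {s t m n : ℕ} (ht : 3 ≤ t) (hn : n = s * m)
    (x : Fin n) : ¬ containsKst n s t (extremalFamily m x) := by
  rintro ⟨A, hmem, hinj, hdisj⟩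
  have hmem' : ∀ j i, m ≤ #(A j i) ∨ (#(A j i) = m - 1 ∧ x ∉ A j i) := fun j i => by
    simpa [extremalFamily] using hmem j i
  have hAinj : ∀ j, Injective (A j) := fun j i i' h =>
    congrArg Prod.snd (@hinj (j, i) (j, i') h)
  set V : Fin s → Finset (Fin n) := fun j => univ.biUnion (A j)
  have hVdisj : Pairwise (Disjoint on V) := fun j j' hjj' =>
    (disjoint_biUnion_left _ _ _).2 fun i _ =>
      (disjoint_biUnion_right _ _ _).2 fun i' _ => hdisj j j' hjj' i i'
  have hmV : ∀ j, m ≤ #(V j) := fun j => Nat.le_of_pred_lt <|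
    lt_card_biUnion_of_injective (hAinj j) (by simp; omega) (k := m - 1)
      fun i => by rcases hmem' j i with h | h <;> omega
  obtain ⟨hcover, hVcard⟩ := biUnion_eq_univ_and_card_eq_of_le hVdisj hmV (by simp [hn])
  obtain ⟨j, -, hxV⟩ := mem_biUnion.1 (hcover ▸ mem_univ x)
  have hmaps : Set.MapsTo (A j) (univ : Finset (Fin t)) ({V j, (V j).erase x} : Finset _) :=
    fun i _ => by
      have := eq_or_eq_erase_of_subset hxV (subset_biUnion_of_mem (A j) (mem_univ i))
        (by rw [hVcard j]; exact hmem' j i)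
      simpa using this
  have : t ≤ 2 := by
    simpa using (card_le_card_of_injOn (A j) hmaps (hAinj j).injOn).trans card_le_two
  omega

theorem le_vexKst {n s t : ℕ} {F : Finset (Finset (Fin n))} (hF : ¬ containsKst n s t F) :
    #F ≤ vexKst n s t :=
  le_csSup ⟨Fintype.card (Finset (Fin n)), by rintro k ⟨G, -, rfl⟩; exact card_le_univ G⟩
    ⟨F, hF, rfl⟩

theorem stmt2_general (s t m n : ℕ) (ht : 3 ≤ t)
    (hn : n = s * m) (x : Fin n) :
    ¬ containsKst n s t
        (univ.filter fun X : Finset (Fin n) =>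
          m ≤ X.card ∨ (X.card = m - 1 ∧ x ∉ X)) ∧
      (∑ i ∈ Finset.Icc m n, n.choose i) + (n - 1).choose (m - 1) ≤ vexKst n s t := by
  have hfree := not_containsKst_extremalFamily ht hn x
  have hm : 0 < m := Nat.pos_of_mul_pos_left (hn ▸ x.pos)
  refine ⟨hfree, ?_⟩
  simpa [card_extremalFamily hm] using le_vexKst hfree

/-- for `n = sm`, `t ≥ 3`, the family of all subsets of size at least `m`
together with all subsets of size `m-1` not containing a fixed element `x` is
`K_{s×t}`-free, hence `vex(n, K_{s×t}) ≥ Σ_{i=m}^n C(n,i) + C(n-1, m-1)`. -/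
theorem stmt2 (s t m n : ℕ) (hs : 2 ≤ s) (ht : 3 ≤ t) (hm : 2 ≤ m)
    (hn : n = s * m) (x : Fin n) :
    ¬ containsKst n s t
        (univ.filter fun X : Finset (Fin n) =>
          m ≤ X.card ∨ (X.card = m - 1 ∧ x ∉ X)) ∧
      (∑ i ∈ Finset.Icc m n, n.choose i) + (n - 1).choose (m - 1) ≤ vexKst n s t :=
  stmt2_general s t m n ht hn x
end

section
/- Let G be a finite simple graph with at least one edge. Then there exists n_0 such that for all n ≥ n_0, the family F_{n,G} = {X ⊆ [n] : |X| > emb(n,G)} is G-free; consequently, for all n ≥ n_0, 2^n - vex(n,G) ≤ Σ_{i=0}^{emb(n,G)} C(n,i). -/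
open Finset

/-- The Kneser cube: the simple graph on all subsets of `[n]`, with two distinct
sets adjacent iff they are disjoint. -/
def kneserCube (n : ℕ) : SimpleGraph (Finset (Fin n)) where
  Adj A B := A ≠ B ∧ Disjoint A B
  symm := ⟨fun _ _ h => ⟨h.1.symm, h.2.symm⟩⟩
  loopless := ⟨fun _ h => h.1 rfl⟩

/-- The Kneser graph `Kn(n, m)`: the simple graph on all `m`-element subsets of `[n]`,
with two distinct sets adjacent iff they are disjoint. -/
def kneserGraph (n m : ℕ) : SimpleGraph {A : Finset (Fin n) // A.card = m} where
  Adj A B := A ≠ B ∧ Disjoint A.1 B.1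
  symm := ⟨fun _ _ h => ⟨h.1.symm, h.2.symm⟩⟩
  loopless := ⟨fun _ h => h.1 rfl⟩

/-- `H` contains a subgraph isomorphic to `G`, i.e. there is an injective graph
homomorphism from `G` into `H`. -/
def hasCopy {V W : Type*} (G : SimpleGraph V) (H : SimpleGraph W) : Prop :=
  ∃ f : V → W, Function.Injective f ∧ ∀ a b, G.Adj a b → H.Adj (f a) (f b)

/-- A family `F` of subsets of `[n]` is `G`-free if the subgraph of the Kneser cube
induced on `F` contains no subgraph isomorphic to `G`. -/
def gFree {V : Type*} (G : SimpleGraph V) (n : ℕ) (F : Finset (Finset (Fin n))) : Prop :=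
  ¬ ∃ f : V → Finset (Fin n),
      Function.Injective f ∧ (∀ v, f v ∈ F) ∧
        ∀ a b, G.Adj a b → (kneserCube n).Adj (f a) (f b)

/-- `vexG n G` : the maximum size of a `G`-free family of subsets of `[n]`. -/
noncomputable def vexG {V : Type*} (n : ℕ) (G : SimpleGraph V) : ℕ :=
  sSup {k | ∃ F : Finset (Finset (Fin n)), gFree G n F ∧ F.card = k}

/-- `emb n G` : the maximum `m` such that the Kneser graph `Kn(n, m)` contains a
subgraph isomorphic to `G`. -/
noncomputable def emb {V : Type*} (n : ℕ) (G : SimpleGraph V) : ℕ :=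
  sSup {m | hasCopy G (kneserGraph n m)}

/-!
For `n ≥ |V|²`, sending the vertices of `G` to pairwise disjoint blocks of size `|V|` embeds
`G` in `Kn(n, |V|)`, so `m := emb(n, G) ≥ |V|`. A copy of `G` among sets of size `> m` can then
be shrunk, by Hall's theorem, to a copy among sets of size exactly `m + 1`: a set of size
`> m + 1` has at least `m + 2 ≥ |V|` subsets of size `m + 1`. This contradicts the maximality
of `m`. The counting bound follows since the complement of that family consists of the sets
of size `≤ m`.
-/

theorem Finset.exists_injective_subset_card_eq {ι α : Type*} [Fintype ι] [DecidableEq α]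
    {f : ι → Finset α} (hf : Function.Injective f) {k : ℕ} (hk : ∀ i, k ≤ #(f i))
    (hι : Fintype.card ι ≤ k + 1) :
    ∃ g : ι → Finset α, Function.Injective g ∧ ∀ i, g i ⊆ f i ∧ #(g i) = k := by
  suffices hall : ∀ s : Finset ι, #s ≤ #(s.biUnion fun i => (f i).powersetCard k) by
    obtain ⟨g, hg, hgf⟩ := (all_card_le_biUnion_card_iff_exists_injective _).mp hall
    exact ⟨g, hg, fun i => mem_powersetCard.mp (hgf i)⟩
  intro s
  by_cases hbig : ∃ i ∈ s, k < #(f i)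
  · obtain ⟨i, hi, hik⟩ := hbig
    calc #s ≤ k + 1 := (card_le_univ s).trans hι
      _ = (k + 1).choose k := (Nat.choose_succ_self_right k).symm
      _ ≤ #((f i).powersetCard k) := by rw [card_powersetCard]; exact Nat.choose_le_choose k hik
      _ ≤ _ := card_le_card (subset_biUnion_of_mem (fun i => (f i).powersetCard k) hi)
  · push Not at hbig
    have hmaps : ∀ i ∈ s, f i ∈ s.biUnion fun i => (f i).powersetCard k := fun i hi =>
      mem_biUnion.mpr ⟨i, hi, mem_powersetCard.mpr ⟨subset_rfl, (hbig i hi).antisymm (hk i)⟩⟩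
    exact card_le_card_of_injOn f hmaps hf.injOn

theorem Finset.card_filter_card_le_eq_sum_choose (α : Type*) [Fintype α] (m : ℕ) :
    #{s : Finset α | #s ≤ m} = ∑ i ∈ range (m + 1), (Fintype.card α).choose i := by
  rw [card_eq_sum_card_fiberwise (f := card) (t := range (m + 1))
    (fun s hs => mem_range.mpr (Nat.lt_succ_of_le (mem_filter.mp hs).2))]
  refine sum_congr rfl fun i hi => ?_
  rw [← card_univ, ← card_powersetCard, powersetCard_eq_filter, filter_filter]
  congr 1
  exact filter_congr fun s _ => and_iff_right_of_imp fun h => h ▸ Nat.le_of_lt_succ (mem_range.mp hi)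

section Kneser

variable {V : Type*} (G : SimpleGraph V)

theorem le_of_hasCopy_kneserGraph [Nonempty V] {n m : ℕ} (h : hasCopy G (kneserGraph n m)) :
    m ≤ n := by
  obtain ⟨f, -, -⟩ := h
  obtain ⟨v⟩ := ‹Nonempty V›
  simpa [(f v).2] using card_le_univ (f v).1

theorem bddAbove_setOf_hasCopy_kneserGraph [Nonempty V] (n : ℕ) :
    BddAbove {m | hasCopy G (kneserGraph n m)} :=
  ⟨n, fun _ => le_of_hasCopy_kneserGraph G⟩

theorem le_emb_of_hasCopy [Nonempty V] {n m : ℕ} (h : hasCopy G (kneserGraph n m)) :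
    m ≤ emb n G :=
  le_csSup (bddAbove_setOf_hasCopy_kneserGraph G n) h

theorem hasCopy_kneserGraph_of_card_mul_le [Fintype V] {n k : ℕ} (hk : 0 < k)
    (hn : Fintype.card V * k ≤ n) : hasCopy G (kneserGraph n k) := by
  classical
  let ι : V × Fin k ↪ Fin n :=
    ((Fintype.equivFin V).prodCongr (Equiv.refl _)).toEmbedding.trans
      (finProdFinEquiv.toEmbedding.trans (Fin.castLEEmb hn))
  let block : V → Finset (Fin n) := fun v => univ.map ((Function.Embedding.sectR v _).trans ι)
  have hdisj : ∀ v w, v ≠ w → Disjoint (block v) (block w) := fun v w hvw =>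
    disjoint_left.mpr fun x hv hw => by
      obtain ⟨i, -, rfl⟩ := mem_map.mp hv
      obtain ⟨j, -, hj⟩ := mem_map.mp hw
      exact hvw (congrArg Prod.fst (ι.injective hj)).symm
  have hinj : Function.Injective block := fun v w h => by
    by_contra hvw
    have := hdisj v w hvw
    rw [h, disjoint_self_iff_empty, ← card_eq_zero] at this
    simp [block, card_map] at this
    omega
  refine ⟨fun v => ⟨block v, by simp [block]⟩, fun v w h => hinj (congrArg Subtype.val h),
    fun a b hab => ⟨fun h => G.ne_of_adj hab (hinj (congrArg Subtype.val h)),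
      hdisj a b (G.ne_of_adj hab)⟩⟩

theorem gFree_filter_emb_lt_card [Fintype V] [Nonempty V] {n : ℕ}
    (hV : Fintype.card V ≤ emb n G + 2) :
    gFree G n {X : Finset (Fin n) | emb n G < #X} := by
  rintro ⟨f, hf, hfF, hadj⟩
  obtain ⟨g, hg, hgf⟩ := exists_injective_subset_card_eq hf (k := emb n G + 1)
    (fun v => (mem_filter.mp (hfF v)).2) hV
  have hcopy : hasCopy G (kneserGraph n (emb n G + 1)) :=
    ⟨fun v => ⟨g v, (hgf v).2⟩, fun v w h => hg (congrArg Subtype.val h),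
      fun a b hab => ⟨fun h => G.ne_of_adj hab (hg (congrArg Subtype.val h)),
        (hadj a b hab).2.mono (hgf a).1 (hgf b).1⟩⟩
  exact (le_emb_of_hasCopy G hcopy).not_gt (Nat.lt_succ_self _)

theorem card_le_vexG {n : ℕ} {F : Finset (Finset (Fin n))} (hF : gFree G n F) :
    #F ≤ vexG n G := by
  refine le_csSup ⟨2 ^ n, ?_⟩ ⟨F, hF, rfl⟩
  rintro _ ⟨F', -, rfl⟩
  simpa using card_le_univ F'

theorem two_pow_sub_vexG_le {n m : ℕ} (hF : gFree G n {X : Finset (Fin n) | m < #X}) :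
    2 ^ n - vexG n G ≤ ∑ i ∈ range (m + 1), n.choose i := by
  have hsplit := card_filter_add_card_filter_not (s := (univ : Finset (Finset (Fin n))))
    (fun X => m < #X)
  simp only [not_lt, card_univ, Fintype.card_finset, Fintype.card_fin] at hsplit
  have hsmall := card_filter_card_le_eq_sum_choose (Fin n) m
  rw [Fintype.card_fin] at hsmall
  have := card_le_vexG G hF
  omega

end Kneser

/-- for a finite simple graph `G` with at least one edge, for all large
enough `n` the family `{X ⊆ [n] : |X| > emb(n,G)}` is `G`-free, and consequently
`2^n - vex(n,G) ≤ Σ_{i=0}^{emb(n,G)} C(n,i)`. -/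
theorem stmt17 {V : Type*} [Fintype V] (G : SimpleGraph V)
    (hedge : ∃ a b, G.Adj a b) :
    ∃ n₀ : ℕ, ∀ n : ℕ, n₀ ≤ n →
      gFree G n (univ.filter fun X : Finset (Fin n) => emb n G < X.card) ∧
        2 ^ n - vexG n G ≤ ∑ i ∈ Finset.range (emb n G + 1), n.choose i := by
  obtain ⟨a, -, -⟩ := hedge
  have : Nonempty V := ⟨a⟩
  have hV : 0 < Fintype.card V := Fintype.card_pos
  refine ⟨Fintype.card V * Fintype.card V, fun n hn => ?_⟩
  have hemb : Fintype.card V ≤ emb n G :=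
    le_emb_of_hasCopy G (hasCopy_kneserGraph_of_card_mul_le G hV hn)
  have hfree := gFree_filter_emb_lt_card G (hemb.trans (Nat.le_add_right _ 2))
  exact ⟨hfree, two_pow_sub_vexG_le G hfree⟩
end

section
/- Let G be a finite simple graph with at least one edge and let n be such that the Kneser graph Kn(n, emb(n,G)) contains a subgraph isomorphic to G. Then every G-free family F of subsets of [n] misses at least C(n, emb(n,G)) / |V(G)| subsets of size emb(n,G); consequently 2^n - vex(n,G) ≥ C(n, emb(n,G)) / |V(G)|. -/
/-!
Move a fixed copy of `G` in `Kn(n, m)` by a uniformly random permutation `σ` of `[n]`. The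
image is again a copy of `G` in the Kneser cube, so a `G`-free family `F` misses one of its
`|V(G)|` vertices. Each vertex is a uniformly random `m`-set, hence misses `F` with probability
`#missing / C(n, m)`, and the union bound gives `1 ≤ |V(G)| · #missing / C(n, m)`.
-/

open Finset

open MulAction
open scoped Pointwise

section TransitiveCount

variable {G X : Type*} [Group G] [MulAction G X] [Fintype G] [DecidableEq X]
  [IsPretransitive G X]

theorem card_filter_smul_eq_congr (x y y' : X) :
    #{g : G | g • x = y} = #{g : G | g • x = y'} := by
  obtain ⟨h, rfl⟩ := exists_smul_eq G y y'
  refine card_equiv (Equiv.mulLeft h) fun g => ?_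
  simp [mul_smul]

theorem card_filter_smul_mem_mul_card [Fintype X] (x : X) (S : Finset X) :
    #{g : G | g • x ∈ S} * Fintype.card X = #S * Fintype.card G := by
  have hfiber (y : X) : #{g : G | g • x = y} = #{g : G | g • x = x} :=
    card_filter_smul_eq_congr x y x
  have hS : #{g : G | g • x ∈ S} = #S * #{g : G | g • x = x} := by
    rw [← sum_card_fiberwise_eq_card_filter, sum_congr rfl fun y _ => hfiber y, sum_const,
      smul_eq_mul]
  have hG : Fintype.card G = Fintype.card X * #{g : G | g • x = x} := by
    rw [← card_univ, ← card_univ (α := X), card_eq_sum_card_fiberwise (f := (· • x))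
      (t := univ) (fun _ _ => mem_coe.2 (mem_univ _)), sum_congr rfl fun y _ => hfiber y,
      sum_const, smul_eq_mul]
  rw [hS, hG]
  ring

end TransitiveCount

theorem kneserCube_adj_smul {n : ℕ} (σ : Equiv.Perm (Fin n)) {A B : Finset (Fin n)} :
    (kneserCube n).Adj (σ • A) (σ • B) ↔ (kneserCube n).Adj A B := by
  simp only [kneserCube, ne_eq, smul_left_cancel_iff, ← disjoint_coe, coe_smul_finset,
    Set.disjoint_smul_set]

theorem kneserGraph_adj_iff_kneserCube_adj {n m : ℕ} {A B : {A : Finset (Fin n) // A.card = m}} :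
    (kneserGraph n m).Adj A B ↔ (kneserCube n).Adj A.1 B.1 := by
  simp only [kneserGraph, kneserCube, ne_eq, Subtype.ext_iff]

theorem gFree.exists_smul_notMem {V : Type*} {G : SimpleGraph V} {n m : ℕ}
    {f : V → {A : Finset (Fin n) // A.card = m}} (hf : Function.Injective f)
    (hadj : ∀ a b, G.Adj a b → (kneserGraph n m).Adj (f a) (f b))
    {F : Finset (Finset (Fin n))} (hF : gFree G n F) (σ : Equiv.Perm (Fin n)) :
    ∃ v, σ • (f v).1 ∉ F := by
  by_contra! hmem
  refine hF ⟨fun v => σ • (f v).1, fun a b hab => hf (Subtype.ext (smul_left_cancel σ hab)),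
    hmem, fun a b hab => ?_⟩
  exact (kneserCube_adj_smul σ).2 (kneserGraph_adj_iff_kneserCube_adj.1 (hadj a b hab))

theorem choose_le_card_missing_mul_card {V : Type*} [Fintype V] (G : SimpleGraph V) {n m : ℕ}
    (hcopy : hasCopy G (kneserGraph n m)) {F : Finset (Finset (Fin n))} (hF : gFree G n F) :
    n.choose m ≤ #{X : Finset (Fin n) | X.card = m ∧ X ∉ F} * Fintype.card V := by
  classical
  obtain ⟨f, hf, hadj⟩ := hcopy
  -- `m`-sets as `Set.powersetCard`, where Mathlib provides the transitive action of `Perm (Fin n)`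
  let P := Set.powersetCard (Fin n) m
  have : IsPretransitive (Equiv.Perm (Fin n)) P := Set.powersetCard.isPretransitive
  let M : Finset P := {X | (X : Finset (Fin n)) ∉ F}
  let e : V → P := fun v => ⟨(f v).1, (f v).2⟩
  have hM : #M = #{X : Finset (Fin n) | X.card = m ∧ X ∉ F} := by
    refine card_bij (fun X _ => X.1) (fun X hX => ?_) (fun _ _ _ _ => Subtype.ext)
      fun A hA => ?_
    · simp_all [M]
    · simp only [mem_filter, mem_univ, true_and] at hA
      exact ⟨⟨A, hA.1⟩, by simpa [M] using hA.2, rfl⟩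
  have hP : Fintype.card P = n.choose m := by
    rw [Fintype.card_eq_nat_card, Set.powersetCard.card, Nat.card_eq_fintype_card,
      Fintype.card_fin]
  have hcover : Fintype.card (Equiv.Perm (Fin n)) ≤
      ∑ v, #{σ : Equiv.Perm (Fin n) | σ • e v ∈ M} := by
    calc Fintype.card (Equiv.Perm (Fin n)) = ∑ _σ : Equiv.Perm (Fin n), 1 := by simp
      _ ≤ ∑ σ : Equiv.Perm (Fin n), #{v | σ • e v ∈ M} := sum_le_sum fun σ _ => by
          obtain ⟨v, hv⟩ := hF.exists_smul_notMem hf hadj σ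
          exact card_pos.2 ⟨v, by simp only [M, mem_filter, mem_univ, true_and]; exact hv⟩
      _ = ∑ v, #{σ : Equiv.Perm (Fin n) | σ • e v ∈ M} := by
          simp only [card_filter]; exact sum_comm
  have hcount (v : V) : #{σ : Equiv.Perm (Fin n) | σ • e v ∈ M} * n.choose m =
      #M * Fintype.card (Equiv.Perm (Fin n)) := by
    rw [← hP]; exact card_filter_smul_mem_mul_card (e v) M
  have hpos : 0 < Fintype.card (Equiv.Perm (Fin n)) := Fintype.card_pos
  rw [← hM]
  refine le_of_mul_le_mul_right ?_ hpos
  calc n.choose m * Fintype.card (Equiv.Perm (Fin n))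
      ≤ n.choose m * ∑ v, #{σ : Equiv.Perm (Fin n) | σ • e v ∈ M} := by gcongr
    _ = #M * Fintype.card V * Fintype.card (Equiv.Perm (Fin n)) := by
        rw [mul_comm, sum_mul, sum_congr rfl fun v _ => hcount v, sum_const, card_univ,
          smul_eq_mul]
        ring

theorem card_missing_add_card_le {n : ℕ} (m : ℕ) (F : Finset (Finset (Fin n))) :
    #{X : Finset (Fin n) | X.card = m ∧ X ∉ F} + #F ≤ 2 ^ n :=
  calc #{X : Finset (Fin n) | X.card = m ∧ X ∉ F} + #F ≤ #(univ \ F) + #F := by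
        gcongr
        intro X hX
        simp_all
    _ = 2 ^ n := by
        rw [card_sdiff_add_card_eq_card (subset_univ F), card_univ, Fintype.card_finset,
          Fintype.card_fin]

theorem exists_gFree_card_eq_vexG {V : Type*} [Nonempty V] (G : SimpleGraph V) (n : ℕ) :
    ∃ F, gFree G n F ∧ F.card = vexG n G := by
  refine Nat.sSup_mem (s := {k | ∃ F, gFree G n F ∧ F.card = k}) ⟨0, ∅, ?_, card_empty⟩
    ⟨2 ^ n, ?_⟩
  · rintro ⟨f, -, hf, -⟩
    exact notMem_empty _ (hf (Classical.arbitrary V))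
  · rintro k ⟨F, -, rfl⟩
    exact (card_le_univ F).trans_eq (by simp)

/-- for a finite simple graph `G` with at least one edge, and `n` such
that `Kn(n, emb(n,G))` contains a subgraph isomorphic to `G`, every `G`-free family
`F` of subsets of `[n]` misses at least `C(n, emb(n,G)) / |V(G)|` subsets of size
`emb(n,G)`; consequently `2^n - vex(n,G) ≥ C(n, emb(n,G)) / |V(G)|`. -/
theorem stmt18 {V : Type*} [Fintype V] (G : SimpleGraph V)
    (hedge : ∃ a b, G.Adj a b) (n : ℕ)
    (hcopy : hasCopy G (kneserGraph n (emb n G))) :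
    (∀ F : Finset (Finset (Fin n)), gFree G n F →
      (n.choose (emb n G) : ℝ) / (Fintype.card V : ℝ) ≤
        ((univ.filter fun X : Finset (Fin n) => X.card = emb n G ∧ X ∉ F).card : ℝ)) ∧
      (n.choose (emb n G) : ℝ) / (Fintype.card V : ℝ) ≤
        (2 : ℝ) ^ n - (vexG n G : ℝ) := by
  have missing_bound (F : Finset (Finset (Fin n))) (hF : gFree G n F) :
      (n.choose (emb n G) : ℝ) / (Fintype.card V : ℝ) ≤
        ((univ.filter fun X : Finset (Fin n) => X.card = emb n G ∧ X ∉ F).card : ℝ) :=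
    div_le_of_le_mul₀ (by positivity) (by positivity)
      (by exact_mod_cast choose_le_card_missing_mul_card G hcopy hF)
  refine ⟨missing_bound, ?_⟩
  obtain ⟨a, -⟩ := hedge
  have : Nonempty V := ⟨a⟩
  obtain ⟨F, hF, hcard⟩ := exists_gFree_card_eq_vexG G n
  rw [← hcard, le_sub_iff_add_le]
  have hcount : (#{X : Finset (Fin n) | X.card = emb n G ∧ X ∉ F} : ℝ) + #F ≤ 2 ^ n := by
    exact_mod_cast card_missing_add_card_le (emb n G) F
  linarith [missing_bound F hF]
end
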